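/- For λ > 0, t > s ≥ 0 and real x, the integral ∫_s^t (r−s)·p(r−s, x, λ(r−s)) dr equals (1/λ³)·exp(−λα(x))·Φ(λ√(t−s) − |x|/√(t−s)) − (1/λ³)·exp(λγ(x))·Φ(−λ√(t−s) − |x|/√(t−s)) + (|x|/λ²)·exp(−λα(x))·Φ(λ√(t−s) − |x|/√(t−s)) + (|x|/λ²)·exp(λγ(x))·Φ(−λ√(t−s) − |x|/√(t−s)) − (2/λ²)·(t−s)·p(t−s, x, λ(t−s)). -/

import Mathlib

/-!
After the substitution `u = r - s` the integrand is `u * p(u, x, λu) = √u * φ(λ√u - x/√u)`,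
with `φ` the standard normal density. The right-hand side, read as a function `F` of
`u = t - s`, is a primitive of it on `(0, ∞)`. Completing the square gives
`φ(λq - a/q) = exp(λ(a - b)) * φ(λq - b/q)` whenever `a² = b²`; with `a = ±|x|` and `b = x`
the derivatives of both `Φ`-terms become multiples of the integrand's density, and the
coefficients `1/λ³ ± |x|/λ²` are exactly the ones that make `F' = u * p(u, x, λu)`.
As `u → 0⁺`, `u * p(u, x, λu) ≤ √u → 0`, and both `Φ`-arguments tend to `-∞` when `x ≠ 0`,
while for `x = 0` they tend to `0` and the two `Φ`-terms cancel; so `F(0⁺) = 0`, and the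
fundamental theorem of calculus with a one-sided limit at the left endpoint gives the formula.
-/

open MeasureTheory Real intervalIntegral

/-- Gaussian density with variance `t` and mean `m`, evaluated at `x`. -/
noncomputable def gaussDensity (t x m : ℝ) : ℝ :=
  Real.exp (-(x - m) ^ 2 / (2 * t)) / Real.sqrt (2 * Real.pi * t)

/-- Standard normal cumulative distribution function. -/
noncomputable def Phi (x : ℝ) : ℝ :=
  ∫ u in Set.Iic x, Real.exp (-u ^ 2 / 2) / Real.sqrt (2 * Real.pi)

/-- `α(x) = |x| − x`. -/
noncomputable def alphaFn (x : ℝ) : ℝ := |x| - x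

/-- `γ(x) = |x| + x`. -/
noncomputable def gammaFn (x : ℝ) : ℝ := |x| + x

open Filter Topology Set

noncomputable def stdNormalPDF (y : ℝ) : ℝ := exp (-y ^ 2 / 2) / √(2 * π)

lemma continuous_stdNormalPDF : Continuous stdNormalPDF := by
  unfold stdNormalPDF; fun_prop

lemma integrable_stdNormalPDF : Integrable stdNormalPDF := by
  unfold stdNormalPDF
  convert (integrable_exp_neg_mul_sq (b := 1 / 2) (by norm_num)).div_const (√(2 * π)) using 4
  ring

lemma stdNormalPDF_nonneg (y : ℝ) : 0 ≤ stdNormalPDF y := by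
  unfold stdNormalPDF; positivity

lemma stdNormalPDF_le_one (y : ℝ) : stdNormalPDF y ≤ 1 := by
  have h1 : exp (-y ^ 2 / 2) ≤ 1 := exp_le_one_iff.2 (by nlinarith [sq_nonneg y])
  have h2 : 1 ≤ √(2 * π) := one_le_sqrt.2 (by nlinarith [pi_gt_three])
  exact div_le_one_of_le₀ (h1.trans h2) (by positivity)

lemma stdNormalPDF_neg (y : ℝ) : stdNormalPDF (-y) = stdNormalPDF y := by
  simp [stdNormalPDF]

lemma hasDerivAt_stdNormalPDF (y : ℝ) : HasDerivAt stdNormalPDF (-y * stdNormalPDF y) y := by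
  have h : HasDerivAt (fun z : ℝ => -z ^ 2 / 2) (-y) y :=
    ((hasDerivAt_pow 2 y).neg.div_const 2).congr_deriv (by ring)
  exact (h.exp.div_const (√(2 * π))).congr_deriv (by unfold stdNormalPDF; ring)

lemma stdNormalPDF_mul_sub_div (c : ℝ) {a b q : ℝ} (hq : q ≠ 0) (hab : a ^ 2 = b ^ 2) :
    stdNormalPDF (c * q - a / q) = exp (c * (a - b)) * stdNormalPDF (c * q - b / q) := by
  simp only [stdNormalPDF, ← mul_div_assoc, ← exp_add]
  congr 2
  field_simp
  linear_combination (-1) * hab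

lemma hasDerivAt_Phi (y : ℝ) : HasDerivAt Phi (stdNormalPDF y) y := by
  have hPhi : Phi = fun z => Phi 0 + ∫ w in (0 : ℝ)..z, stdNormalPDF w := by
    funext z
    have := integral_Iic_sub_Iic (μ := volume) (a := 0) (b := z)
      integrable_stdNormalPDF.integrableOn integrable_stdNormalPDF.integrableOn
    change ∫ u in Iic z, stdNormalPDF u = (∫ u in Iic 0, stdNormalPDF u) + _
    linarith
  rw [hPhi]
  exact (integral_hasDerivAt_right integrable_stdNormalPDF.intervalIntegrable
    (continuous_stdNormalPDF.stronglyMeasurableAtFilter _ _)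
    continuous_stdNormalPDF.continuousAt).const_add _

lemma continuous_Phi : Continuous Phi :=
  continuous_iff_continuousAt.2 fun y => (hasDerivAt_Phi y).continuousAt

lemma tendsto_Phi_atBot : Tendsto Phi atBot (𝓝 0) :=
  tendsto_integral_Iic_zero tendsto_id

lemma hasDerivAt_mul_sqrt_sub_div_sqrt (c a : ℝ) {u : ℝ} (hu : 0 < u) :
    HasDerivAt (fun v => c * √v - a / √v) ((c + a / u) / (2 * √u)) u := by
  have hq : 0 < √u := sqrt_pos.2 hu
  have hsqrt := hasDerivAt_sqrt hu.ne'
  refine ((hsqrt.const_mul c).sub ((hasDerivAt_const u a).div hsqrt hq.ne')).congr_deriv ?_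
  rw [sq_sqrt hu.le]
  field_simp
  rw [sq_sqrt hu.le]
  ring

lemma tendsto_sqrt_nhdsGT_zero : Tendsto (√·) (𝓝[>] (0 : ℝ)) (𝓝[>] 0) :=
  tendsto_nhdsWithin_iff.2
    ⟨(continuous_sqrt.tendsto' 0 0 sqrt_zero).mono_left nhdsWithin_le_nhds,
      eventually_nhdsWithin_of_forall fun _ hu => sqrt_pos.2 hu⟩

lemma tendsto_mul_sqrt_sub_div_sqrt_atBot (c : ℝ) {a : ℝ} (ha : 0 < a) :
    Tendsto (fun v => c * √v - a / √v) (𝓝[>] 0) atBot := by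
  have hc : Tendsto (fun v => c * √v) (𝓝[>] 0) (𝓝 0) := by
    simpa using (tendsto_sqrt_nhdsGT_zero.mono_right nhdsWithin_le_nhds).const_mul c
  have ha : Tendsto (fun v => a / √v) (𝓝[>] 0) atTop := by
    simpa [div_eq_mul_inv] using
      (tendsto_sqrt_nhdsGT_zero.inv_tendsto_nhdsGT_zero).const_mul_atTop ha
  simpa [sub_eq_add_neg] using hc.add_atBot (tendsto_neg_atTop_atBot.comp ha)

lemma sqrt_mul_gaussDensity {u : ℝ} (hu : 0 < u) (x m : ℝ) :
    √u * gaussDensity u x m = stdNormalPDF ((x - m) / √u) := by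
  rw [gaussDensity, stdNormalPDF, sqrt_mul (by positivity), div_pow, sq_sqrt hu.le]
  field_simp

lemma mul_gaussDensity_drift (c x : ℝ) {u : ℝ} (hu : 0 < u) :
    u * gaussDensity u x (c * u) = √u * stdNormalPDF (c * √u - x / √u) := by
  have hsplit : (x - c * u) / √u = -(c * √u - x / √u) := by
    field_simp
    rw [sq_sqrt hu.le]
    ring
  rw [← stdNormalPDF_neg, ← hsplit, ← sqrt_mul_gaussDensity hu, ← mul_assoc,
    mul_self_sqrt hu.le]

lemma hasDerivAt_mul_gaussDensity_drift (c x : ℝ) {u : ℝ} (hu : 0 < u) :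
    HasDerivAt (fun v => v * gaussDensity v x (c * v))
      (stdNormalPDF (c * √u - x / √u) *
        (1 / (2 * √u) - √u * (c * √u - x / √u) * ((c + x / u) / (2 * √u)))) u := by
  have heq : (fun v => v * gaussDensity v x (c * v)) =ᶠ[𝓝 u]
      fun v => √v * stdNormalPDF (c * √v - x / √v) :=
    eventually_of_mem (Ioi_mem_nhds hu) fun v hv => mul_gaussDensity_drift c x hv
  refine (((hasDerivAt_sqrt hu.ne').mul ((hasDerivAt_stdNormalPDF _).comp u
    (hasDerivAt_mul_sqrt_sub_div_sqrt c x hu))).congr_of_eventuallyEq heq).congr_deriv ?_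
  simp only [Function.comp_apply]
  ring

lemma tendsto_mul_gaussDensity_drift_zero (c x : ℝ) :
    Tendsto (fun u => u * gaussDensity u x (c * u)) (𝓝[>] 0) (𝓝 0) := by
  have hsqrt : Tendsto (√·) (𝓝[>] (0 : ℝ)) (𝓝 0) :=
    tendsto_sqrt_nhdsGT_zero.mono_right nhdsWithin_le_nhds
  refine (hsqrt.zero_mul_isBoundedUnder_le ?_).congr'
    (eventually_nhdsWithin_of_forall fun u hu => (mul_gaussDensity_drift c x hu).symm)
  exact isBoundedUnder_of ⟨1, fun u => by
    simpa [abs_of_nonneg (stdNormalPDF_nonneg _)] using stdNormalPDF_le_one _⟩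

lemma intervalIntegrable_mul_gaussDensity_drift (c x : ℝ) {T : ℝ} (hT : 0 ≤ T) :
    IntervalIntegrable (fun u => u * gaussDensity u x (c * u)) volume 0 T := by
  rw [intervalIntegrable_iff_integrableOn_Ioc_of_le hT]
  refine Measure.integrableOn_of_bounded (M := √T) measure_Ioc_lt_top.ne
    (by unfold gaussDensity; fun_prop) ?_
  rw [ae_restrict_iff' measurableSet_Ioc]
  refine Eventually.of_forall fun u hu => ?_
  rw [mul_gaussDensity_drift c x hu.1, norm_mul, norm_of_nonneg (sqrt_nonneg u),
    norm_of_nonneg (stdNormalPDF_nonneg _)]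
  exact (mul_le_of_le_one_right (sqrt_nonneg u) (stdNormalPDF_le_one _)).trans (sqrt_le_sqrt hu.2)

noncomputable def driftPrimitive (lam x u : ℝ) : ℝ :=
  (1 / lam ^ 3 + |x| / lam ^ 2) * exp (-lam * alphaFn x) * Phi (lam * √u - |x| / √u)
    + (|x| / lam ^ 2 - 1 / lam ^ 3) * exp (lam * gammaFn x) * Phi (-(lam * √u) - |x| / √u)
    - 2 / lam ^ 2 * (u * gaussDensity u x (lam * u))

lemma driftPrimitive_deriv_identity {lam q a x : ℝ} (hlam : lam ≠ 0) (hq : q ≠ 0)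
    (ha : a ^ 2 = x ^ 2) :
    (1 / lam ^ 3 + a / lam ^ 2) * ((lam + a / q ^ 2) / (2 * q))
      + (a / lam ^ 2 - 1 / lam ^ 3) * ((-lam + a / q ^ 2) / (2 * q))
      - 2 / lam ^ 2 * (1 / (2 * q) - q * (lam * q - x / q) * ((lam + x / q ^ 2) / (2 * q)))
      = q := by
  field_simp
  linear_combination 2 * lam * ha

lemma hasDerivAt_driftPrimitive {lam : ℝ} (hlam : lam ≠ 0) (x : ℝ) {u : ℝ} (hu : 0 < u) :
    HasDerivAt (driftPrimitive lam x) (u * gaussDensity u x (lam * u)) u := by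
  have hq : √u ≠ 0 := (sqrt_pos.2 hu).ne'
  have hA : exp (-lam * alphaFn x) * stdNormalPDF (lam * √u - |x| / √u) =
      stdNormalPDF (lam * √u - x / √u) := by
    rw [stdNormalPDF_mul_sub_div lam hq (sq_abs x), alphaFn, ← mul_assoc, ← exp_add,
      show -lam * (|x| - x) + lam * (|x| - x) = 0 by ring, exp_zero, one_mul]
  have hB : exp (lam * gammaFn x) * stdNormalPDF (-(lam * √u) - |x| / √u) =
      stdNormalPDF (lam * √u - x / √u) := by
    rw [← stdNormalPDF_neg (-(lam * √u) - |x| / √u),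
      show -(-(lam * √u) - |x| / √u) = lam * √u - -|x| / √u by ring,
      stdNormalPDF_mul_sub_div lam (b := x) hq (by rw [neg_sq, sq_abs]), gammaFn, ← mul_assoc,
      ← exp_add, show lam * (|x| + x) + lam * (-|x| - x) = 0 by ring, exp_zero, one_mul]
  have dA := (hasDerivAt_Phi _).comp u (hasDerivAt_mul_sqrt_sub_div_sqrt lam |x| hu)
  have dB := (hasDerivAt_Phi _).comp u (hasDerivAt_mul_sqrt_sub_div_sqrt (-lam) |x| hu)
  simp only [neg_mul] at dB
  refine (((dA.const_mul _).add (dB.const_mul _)).sub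
    ((hasDerivAt_mul_gaussDensity_drift lam x hu).const_mul (2 / lam ^ 2))).congr_deriv ?_
  have key := driftPrimitive_deriv_identity hlam hq (sq_abs x)
  rw [sq_sqrt hu.le] at key
  rw [mul_gaussDensity_drift lam x hu]
  linear_combination ((1 / lam ^ 3 + |x| / lam ^ 2) * ((lam + |x| / u) / (2 * √u))) * hA
    + ((|x| / lam ^ 2 - 1 / lam ^ 3) * ((-lam + |x| / u) / (2 * √u))) * hB
    + stdNormalPDF (lam * √u - x / √u) * key

lemma tendsto_driftPrimitive_zero (lam x : ℝ) :
    Tendsto (driftPrimitive lam x) (𝓝[>] 0) (𝓝 0) := by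
  have hG := (tendsto_mul_gaussDensity_drift_zero lam x).const_mul (2 / lam ^ 2)
  rw [mul_zero] at hG
  rcases eq_or_ne x 0 with rfl | hx
  · have hsqrt : Tendsto (fun v => lam * √v) (𝓝[>] 0) (𝓝 0) := by
      simpa using (tendsto_sqrt_nhdsGT_zero.mono_right nhdsWithin_le_nhds).const_mul lam
    have hA := (continuous_Phi.tendsto 0).comp hsqrt
    have hB := (continuous_Phi.tendsto 0).comp (neg_zero (G := ℝ) ▸ hsqrt.neg)
    have := ((hA.const_mul (1 / lam ^ 3)).sub (hB.const_mul (1 / lam ^ 3))).sub hG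
    rw [sub_self, sub_zero] at this
    refine this.congr fun u => ?_
    simp [driftPrimitive, alphaFn, gammaFn]
    ring
  · have hA := tendsto_Phi_atBot.comp (tendsto_mul_sqrt_sub_div_sqrt_atBot lam (abs_pos.2 hx))
    have hB := tendsto_Phi_atBot.comp (tendsto_mul_sqrt_sub_div_sqrt_atBot (-lam) (abs_pos.2 hx))
    simp only [neg_mul] at hB
    have := ((hA.const_mul ((1 / lam ^ 3 + |x| / lam ^ 2) * exp (-lam * alphaFn x))).add
      (hB.const_mul ((|x| / lam ^ 2 - 1 / lam ^ 3) * exp (lam * gammaFn x)))).sub hG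
    rw [mul_zero, mul_zero, add_zero, sub_zero] at this
    exact this

theorem stmt_8_general (lam t s x : ℝ) (hlam : 0 < lam) (hst : s < t) :
    ∫ r in s..t, (r - s) * gaussDensity (r - s) x (lam * (r - s)) =
      (1 / lam ^ 3) * Real.exp (-lam * alphaFn x) *
          Phi (lam * Real.sqrt (t - s) - |x| / Real.sqrt (t - s))
        - (1 / lam ^ 3) * Real.exp (lam * gammaFn x) *
          Phi (-(lam * Real.sqrt (t - s)) - |x| / Real.sqrt (t - s))
        + (|x| / lam ^ 2) * Real.exp (-lam * alphaFn x) *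
          Phi (lam * Real.sqrt (t - s) - |x| / Real.sqrt (t - s))
        + (|x| / lam ^ 2) * Real.exp (lam * gammaFn x) *
          Phi (-(lam * Real.sqrt (t - s)) - |x| / Real.sqrt (t - s))
        - (2 / lam ^ 2) * (t - s) * gaussDensity (t - s) x (lam * (t - s)) := by
  have hT : 0 < t - s := sub_pos.2 hst
  have hderiv : ∀ u, 0 < u → HasDerivAt (driftPrimitive lam x) _ u :=
    fun _ hu => hasDerivAt_driftPrimitive hlam.ne' x hu
  rw [integral_comp_sub_right (fun u => u * gaussDensity u x (lam * u)), sub_self,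
    integral_eq_sub_of_hasDerivAt_of_tendsto hT (fun u hu => hderiv u hu.1)
      (intervalIntegrable_mul_gaussDensity_drift lam x hT.le) (tendsto_driftPrimitive_zero lam x)
      (hderiv _ hT).continuousAt.continuousWithinAt, driftPrimitive]
  ring

theorem stmt_8 (lam t s x : ℝ) (hlam : 0 < lam) (hs : 0 ≤ s) (hst : s < t) :
    ∫ r in s..t, (r - s) * gaussDensity (r - s) x (lam * (r - s)) =
      (1 / lam ^ 3) * Real.exp (-lam * alphaFn x) *
          Phi (lam * Real.sqrt (t - s) - |x| / Real.sqrt (t - s))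
        - (1 / lam ^ 3) * Real.exp (lam * gammaFn x) *
          Phi (-(lam * Real.sqrt (t - s)) - |x| / Real.sqrt (t - s))
        + (|x| / lam ^ 2) * Real.exp (-lam * alphaFn x) *
          Phi (lam * Real.sqrt (t - s) - |x| / Real.sqrt (t - s))
        + (|x| / lam ^ 2) * Real.exp (lam * gammaFn x) *
          Phi (-(lam * Real.sqrt (t - s)) - |x| / Real.sqrt (t - s))
        - (2 / lam ^ 2) * (t - s) * gaussDensity (t - s) x (lam * (t - s)) :=
  stmt_8_general lam t s x hlam hst
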